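/- Let m ≥ 3 be odd, n ≥ 4 be even, and let a,b ∈ Z_n be such that the six elements ±a, ±b, ±(a+b) are pairwise distinct and nonzero. Then the Cayley graph Cay(Z_m × Z_n, {±1} × {±a, ±b, ±(a+b)}) can be decomposed into six C_m-factors. -/
import Mathlib

open SimpleGraph

/-- `H` is a `C_k`-factor: a 2-regular spanning graph all of whose
connected components have exactly `k` vertices (hence are `k`-cycles). -/
def IsCycleFactor {V : Type*} (H : SimpleGraph V) (k : ℕ) : Prop :=
  (∀ v, (H.neighborSet v).ncard = 2) ∧
  (∀ v, (H.connectedComponentMk v).supp.ncard = k)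

/-- `H` is a perfect matching (1-factor): every vertex has exactly one neighbour. -/
def IsOneFactor {V : Type*} (H : SimpleGraph V) : Prop :=
  ∀ v, (H.neighborSet v).ncard = 1

/-- A partition of the edge set of `G` into cycle factors with prescribed cycle lengths. -/
def CycleDecomp {V : Type*} {k : ℕ} (G : SimpleGraph V) (ℓ : Fin k → ℕ) : Prop :=
  ∃ f : Fin k → SimpleGraph V,
    (∀ i, f i ≤ G ∧ IsCycleFactor (f i) (ℓ i)) ∧
    ∀ e ∈ G.edgeSet, ∃! i, e ∈ (f i).edgeSet

/-- A partition of the edge set of `G` into cycle factors with prescribed cycle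
lengths together with one perfect matching. -/
def CycleDecompPM {V : Type*} {k : ℕ} (G : SimpleGraph V) (ℓ : Fin k → ℕ) : Prop :=
  ∃ (f : Fin k → SimpleGraph V) (M : SimpleGraph V),
    (∀ i, f i ≤ G ∧ IsCycleFactor (f i) (ℓ i)) ∧ M ≤ G ∧ IsOneFactor M ∧
    ∀ e ∈ G.edgeSet,
      ((∃! i, e ∈ (f i).edgeSet) ∧ e ∉ M.edgeSet) ∨
      ((∀ i, e ∉ (f i).edgeSet) ∧ e ∈ M.edgeSet)

/-- The Cayley graph on `ZMod m × ZMod n` with connection set `S`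
(symmetrised, loops removed). -/
def cay (m n : ℕ) (S : Set (ZMod m × ZMod n)) : SimpleGraph (ZMod m × ZMod n) :=
  SimpleGraph.fromRel (fun x y => x - y ∈ S)

namespace Stmt4

variable {m n : ℕ}

/-- partial sums of the step sequence -/
def ps (d : ℕ → ZMod n) (k : ℕ) : ZMod n := ∑ i ∈ Finset.range k, d i

/-- height function on `ZMod m` -/
def gg (m : ℕ) (d : ℕ → ZMod n) (z : ZMod m) : ZMod n := ps d z.val

/-- the 2-regular factor with step sequence `d` -/
def fac (m n : ℕ) (d : ℕ → ZMod n) : SimpleGraph (ZMod m × ZMod n) :=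
  SimpleGraph.fromRel (fun p q => q.1 = p.1 + 1 ∧ q.2 = p.2 + d p.1.val)

lemma one_ne_zero' (hm : 3 ≤ m) : (1 : ZMod m) ≠ 0 := by
  haveI : Fact (1 < m) := ⟨by omega⟩
  exact one_ne_zero

lemma two_ne_zero' (hm : 3 ≤ m) : (2 : ZMod m) ≠ 0 := by
  intro h
  have h2 : ((2 : ℕ) : ZMod m) = 0 := by push_cast; exact h
  have := (ZMod.natCast_eq_zero_iff 2 m).mp h2
  have := Nat.le_of_dvd (by norm_num) this
  omega

lemma fac_adj (hm : 3 ≤ m) {d : ℕ → ZMod n} (p q : ZMod m × ZMod n) :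
    (fac m n d).Adj p q ↔
      (q.1 = p.1 + 1 ∧ q.2 = p.2 + d p.1.val) ∨
      (p.1 = q.1 + 1 ∧ p.2 = q.2 + d q.1.val) := by
  rw [fac, fromRel_adj]
  constructor
  · rintro ⟨-, h⟩; exact h
  · intro h
    refine ⟨?_, h⟩
    rintro rfl
    rcases h with ⟨h1, -⟩ | ⟨h1, -⟩ <;>
    · exact one_ne_zero' hm (left_eq_add.mp h1)

lemma gg_add_one (hm : 3 ≤ m) {d : ℕ → ZMod n} (hsum : ps d m = 0) (z : ZMod m) :
    gg m d (z + 1) = gg m d z + d z.val := by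
  haveI : NeZero m := ⟨by omega⟩
  haveI : Fact (1 < m) := ⟨by omega⟩
  have hv : (z + 1).val = (z.val + 1) % m := by
    rw [ZMod.val_add, ZMod.val_one]
  have hzlt : z.val < m := ZMod.val_lt z
  rcases lt_or_eq_of_le (Nat.succ_le_of_lt hzlt) with h | h
  · have : (z + 1).val = z.val + 1 := by rw [hv, Nat.mod_eq_of_lt h]
    rw [gg, gg, this, ps, Finset.sum_range_succ]; rfl
  · have h0 : (z + 1).val = 0 := by
      rw [hv, show z.val + 1 = m by omega]; exact Nat.mod_self m
    have : ps d z.val + d z.val = ps d m := by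
      have hm' : m = z.val + 1 := by omega
      rw [ps, ps, ← Finset.sum_range_succ]
      exact Finset.sum_congr (by rw [← hm']) fun _ _ => rfl
    rw [gg, gg, h0, this, hsum]; rfl

lemma neighborSet_eq (hm : 3 ≤ m) {d : ℕ → ZMod n} (x : ZMod m) (y : ZMod n) :
    (fac m n d).neighborSet (x, y) =
      {(x + 1, y + d x.val), (x - 1, y - d (x - 1).val)} := by
  ext q
  obtain ⟨u, v⟩ := q
  simp only [mem_neighborSet, fac_adj hm, Set.mem_insert_iff, Set.mem_singleton_iff,
    Prod.mk.injEq]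
  constructor
  · rintro (⟨h1, h2⟩ | ⟨h1, h2⟩)
    · exact Or.inl ⟨h1, h2⟩
    · right
      have hu : u = x - 1 := by rw [h1]; ring
      subst hu
      exact ⟨rfl, by linear_combination -h2⟩
  · rintro (⟨h1, h2⟩ | ⟨h1, h2⟩)
    · exact Or.inl ⟨h1, h2⟩
    · subst h1; subst h2
      exact Or.inr ⟨by ring, by ring⟩

lemma deg_two (hm : 3 ≤ m) {d : ℕ → ZMod n} (p : ZMod m × ZMod n) :
    ((fac m n d).neighborSet p).ncard = 2 := by
  obtain ⟨x, y⟩ := p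
  rw [neighborSet_eq hm]
  apply Set.ncard_pair
  intro h
  have h1 : x + 1 = x - 1 := (Prod.ext_iff.mp h).1
  exact two_ne_zero' hm (by linear_combination h1)

/-- the set of vertices of one cycle -/
def Vset (m : ℕ) (d : ℕ → ZMod n) (c : ZMod n) : Set (ZMod m × ZMod n) :=
  Set.range fun z : ZMod m => (z, c + gg m d z)

lemma step_adj (hm : 3 ≤ m) {d : ℕ → ZMod n} (hsum : ps d m = 0) (c : ZMod n) (z : ZMod m) :
    (fac m n d).Adj (z, c + gg m d z) (z + 1, c + gg m d (z + 1)) := by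
  rw [fac_adj hm]
  left
  refine ⟨rfl, ?_⟩
  rw [gg_add_one hm hsum]
  ring

lemma reach_all (hm : 3 ≤ m) {d : ℕ → ZMod n} (hsum : ps d m = 0) (c : ZMod n)
    (z w : ZMod m) :
    (fac m n d).Reachable (z, c + gg m d z) (w, c + gg m d w) := by
  haveI : NeZero m := ⟨by omega⟩
  have key : ∀ k : ℕ, (fac m n d).Reachable (z, c + gg m d z)
      (z + (k : ZMod m), c + gg m d (z + (k : ZMod m))) := by
    intro k
    induction k with
    | zero =>
      simp only [Nat.cast_zero, add_zero]
      exact Reachable.refl _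
    | succ k ih =>
      refine ih.trans (Adj.reachable ?_)
      have hc : ((k + 1 : ℕ) : ZMod m) = (k : ZMod m) + 1 := by push_cast; ring
      rw [hc, ← add_assoc]
      exact step_adj hm hsum c (z + (k : ZMod m))
  have hw : z + (((w - z).val : ℕ) : ZMod m) = w := by
    simp [ZMod.natCast_val]
  have := key (w - z).val
  rwa [hw] at this

lemma closed_adj (hm : 3 ≤ m) {d : ℕ → ZMod n} (hsum : ps d m = 0) (c : ZMod n)
    {q q' : ZMod m × ZMod n} (hq : q ∈ Vset m d c) (h : (fac m n d).Adj q q') :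
    q' ∈ Vset m d c := by
  obtain ⟨z, rfl⟩ := hq
  rw [fac_adj hm] at h
  obtain ⟨u, v⟩ := q'
  rcases h with ⟨h1, h2⟩ | ⟨h1, h2⟩
  · refine ⟨z + 1, ?_⟩
    simp only at h1 h2
    show (z + 1, c + gg m d (z + 1)) = (u, v)
    rw [Prod.ext_iff]
    refine ⟨h1.symm, ?_⟩
    show c + gg m d (z + 1) = v
    rw [gg_add_one hm hsum, h2]; ring
  · refine ⟨u, ?_⟩
    simp only at h1 h2
    show (u, c + gg m d u) = (u, v)
    rw [Prod.ext_iff]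
    refine ⟨rfl, ?_⟩
    have h3 : gg m d z = gg m d u + d u.val := by rw [h1, gg_add_one hm hsum]
    show c + gg m d u = v
    rw [h3] at h2
    linear_combination h2

lemma walk_closed (hm : 3 ≤ m) {d : ℕ → ZMod n} (hsum : ps d m = 0) (c : ZMod n) :
    ∀ {u v : ZMod m × ZMod n}, (fac m n d).Walk u v → u ∈ Vset m d c → v ∈ Vset m d c := by
  intro u v W
  induction W with
  | nil => exact id
  | cons h _ ih => exact fun hu => ih (closed_adj hm hsum c hu h)

lemma supp_eq (hm : 3 ≤ m) {d : ℕ → ZMod n} (hsum : ps d m = 0) (p : ZMod m × ZMod n) :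
    ((fac m n d).connectedComponentMk p).supp = Vset m d (p.2 - gg m d p.1) := by
  have hp : p ∈ Vset m d (p.2 - gg m d p.1) :=
    ⟨p.1, by rw [Prod.ext_iff]; exact ⟨rfl, by ring⟩⟩
  ext w
  rw [ConnectedComponent.mem_supp_iff, ConnectedComponent.eq]
  constructor
  · intro hr
    obtain ⟨W⟩ := hr.symm
    exact walk_closed hm hsum _ W hp
  · rintro ⟨z, rfl⟩
    refine Reachable.trans (reach_all hm hsum (p.2 - gg m d p.1) z p.1) ?_
    have h2 : ((p.1 : ZMod m), (p.2 - gg m d p.1) + gg m d p.1) = p := by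
      rw [Prod.ext_iff]; exact ⟨rfl, by ring⟩
    rw [h2]

lemma ncard_Vset (hm : 3 ≤ m) {d : ℕ → ZMod n} (c : ZMod n) :
    (Vset m d c).ncard = m := by
  haveI : NeZero m := ⟨by omega⟩
  rw [Vset, ← Set.image_univ,
    Set.ncard_image_of_injective _ (fun z w h => (Prod.ext_iff.mp h).1),
    Set.ncard_univ, Nat.card_zmod]

lemma fac_le (hm : 3 ≤ m) {d : ℕ → ZMod n} {S : Set (ZMod m × ZMod n)}
    (hd : ∀ i, ((1 : ZMod m), d i) ∈ S) : fac m n d ≤ cay m n S := by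
  intro p q h
  have hne : p ≠ q := h.ne
  rw [fac_adj hm] at h
  rw [cay, fromRel_adj]
  refine ⟨hne, ?_⟩
  rcases h with ⟨h1, h2⟩ | ⟨h1, h2⟩
  · right
    have : q - p = ((1 : ZMod m), d p.1.val) := by
      rw [Prod.ext_iff]
      exact ⟨by show q.1 - p.1 = 1; rw [h1]; ring, by show q.2 - p.2 = _; rw [h2]; ring⟩
    rw [this]; exact hd _
  · left
    have : p - q = ((1 : ZMod m), d q.1.val) := by
      rw [Prod.ext_iff]
      exact ⟨by show p.1 - q.1 = 1; rw [h1]; ring, by show p.2 - q.2 = _; rw [h2]; ring⟩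
    rw [this]; exact hd _

lemma edge_unique (hm : 3 ≤ m) (dd : Fin 6 → ℕ → ZMod n)
    {p q : ZMod m × ZMod n} (h1 : q.1 = p.1 + 1)
    (hex : ∃! r : Fin 6, dd r p.1.val = q.2 - p.2) :
    ∃! r : Fin 6, s(p, q) ∈ (fac m n (dd r)).edgeSet := by
  obtain ⟨r, hr, hun⟩ := hex
  have key : ∀ r' : Fin 6,
      (s(p, q) ∈ (fac m n (dd r')).edgeSet ↔ dd r' p.1.val = q.2 - p.2) := by
    intro r'
    rw [mem_edgeSet, fac_adj hm]
    constructor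
    · rintro (⟨-, h2⟩ | ⟨h1', -⟩)
      · rw [h2]; ring
      · exfalso
        rw [h1] at h1'
        exact two_ne_zero' hm (by linear_combination -h1')
    · intro h2
      exact Or.inl ⟨h1, by linear_combination -h2⟩
  exact ⟨r, (key r).mpr hr, fun r' h => hun r' ((key r').mp h)⟩

/-- the six step values -/
def ee (a b : ZMod n) : Fin 6 → ZMod n :=
  ([a, b, a + b, -a, -b, -(a + b)] : List (ZMod n)).get

/-- column permutations -/
def sig : ℕ → (Fin 6 → Fin 6) := fun i =>
  if i = 0 then ([0, 1, 5, 3, 4, 2] : List (Fin 6)).get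
  else if i = 1 then ([1, 5, 0, 4, 2, 3] : List (Fin 6)).get
  else if i = 2 then ([5, 0, 1, 2, 3, 4] : List (Fin 6)).get
  else if Odd i then ([0, 1, 5, 3, 4, 2] : List (Fin 6)).get
  else ([3, 4, 2, 0, 1, 5] : List (Fin 6)).get

/-- the step sequences of the six factors -/
def dd (a b : ZMod n) (r : Fin 6) (i : ℕ) : ZMod n := ee a b (sig i r)

lemma sig_bij (i : ℕ) : Function.Bijective (sig i) := by
  unfold sig; split_ifs <;> decide

lemma ee_mem (a b : ZMod n) (t : Fin 6) :
    ee a b t ∈ ({a, b, a + b, -a, -b, -(a + b)} : Set (ZMod n)) := by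
  fin_cases t
  · show a ∈ ({a, b, a + b, -a, -b, -(a + b)} : Set (ZMod n)); simp
  · show b ∈ ({a, b, a + b, -a, -b, -(a + b)} : Set (ZMod n)); simp
  · show a + b ∈ ({a, b, a + b, -a, -b, -(a + b)} : Set (ZMod n)); simp
  · show -a ∈ ({a, b, a + b, -a, -b, -(a + b)} : Set (ZMod n)); simp
  · show -b ∈ ({a, b, a + b, -a, -b, -(a + b)} : Set (ZMod n)); simp
  · show -(a + b) ∈ ({a, b, a + b, -a, -b, -(a + b)} : Set (ZMod n)); simp

lemma ee_surj (a b : ZMod n) {x : ZMod n}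
    (hx : x ∈ ({a, b, a + b, -a, -b, -(a + b)} : Set (ZMod n))) :
    ∃ t, ee a b t = x := by
  simp only [Set.mem_insert_iff, Set.mem_singleton_iff] at hx
  rcases hx with rfl | rfl | rfl | rfl | rfl | rfl
  exacts [⟨0, rfl⟩, ⟨1, rfl⟩, ⟨2, rfl⟩, ⟨3, rfl⟩, ⟨4, rfl⟩, ⟨5, rfl⟩]

lemma ee_inj (a b : ZMod n)
    (h : (({a, b, a + b, -a, -b, -(a + b)} : Set (ZMod n))).ncard = 6) :
    Function.Injective (ee a b) := by
  have hc : (({a, b, a + b, -a, -b, -(a + b)} : Finset (ZMod n)) : Set (ZMod n)).ncard = 6 := by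
    simpa using h
  rw [Set.ncard_coe_finset] at hc
  have hl : ([a, b, a + b, -a, -b, -(a + b)] : List (ZMod n)).toFinset.card = 6 := by
    simpa using hc
  have hnd : ([a, b, a + b, -a, -b, -(a + b)] : List (ZMod n)).Nodup := by
    rw [← Multiset.coe_nodup, ← Multiset.toFinset_card_eq_card_iff_nodup]
    simpa using hl
  exact List.nodup_iff_injective_get.mp hnd

lemma Dsymm (a b : ZMod n) {x : ZMod n}
    (hx : x ∈ ({a, b, a + b, -a, -b, -(a + b)} : Set (ZMod n))) :
    -x ∈ ({a, b, a + b, -a, -b, -(a + b)} : Set (ZMod n)) := by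
  simp only [Set.mem_insert_iff, Set.mem_singleton_iff] at hx ⊢
  rcases hx with rfl | rfl | rfl | rfl | rfl | rfl <;> simp

lemma dd_sum3 (a b : ZMod n) (r : Fin 6) :
    dd a b r 0 + dd a b r 1 + dd a b r 2 = 0 := by
  fin_cases r
  · show a + b + -(a + b) = 0; ring
  · show b + -(a + b) + a = 0; ring
  · show -(a + b) + a + b = 0; ring
  · show -a + -b + (a + b) = 0; ring
  · show -b + (a + b) + -a = 0; ring
  · show (a + b) + -a + -b = 0; ring

lemma dd_pair (a b : ZMod n) (r : Fin 6) (i : ℕ) (h3 : 3 ≤ i) (hodd : Odd i) :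
    dd a b r i + dd a b r (i + 1) = 0 := by
  have heven : ¬ Odd (i + 1) := by simp [Nat.odd_add_one, hodd]
  unfold dd sig
  rw [if_neg (by omega : ¬ i = 0), if_neg (by omega : ¬ i = 1), if_neg (by omega : ¬ i = 2),
    if_pos hodd, if_neg (by omega : ¬ i + 1 = 0), if_neg (by omega : ¬ i + 1 = 1),
    if_neg (by omega : ¬ i + 1 = 2), if_neg heven]
  fin_cases r
  · show a + -a = 0; ring
  · show b + -b = 0; ring
  · show -(a + b) + (a + b) = 0; ring
  · show -a + a = 0; ring
  · show -b + b = 0; ring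
  · show (a + b) + -(a + b) = 0; ring

lemma dd_psum (a b : ZMod n) (r : Fin 6) : ∀ k : ℕ, ps (dd a b r) (2 * k + 3) = 0
  | 0 => by
    show ∑ i ∈ Finset.range 3, dd a b r i = 0
    rw [Finset.sum_range_succ, Finset.sum_range_succ, Finset.sum_range_one]
    exact dd_sum3 a b r
  | (k + 1) => by
    have h1 : 2 * (k + 1) + 3 = (2 * k + 3) + 1 + 1 := by omega
    rw [ps, h1, Finset.sum_range_succ, Finset.sum_range_succ]
    have ih := dd_psum a b r k
    rw [ps] at ih
    rw [ih, zero_add]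
    exact dd_pair a b r (2 * k + 3) (by omega) ⟨k + 1, by omega⟩

lemma dd_rowsum (hm3 : 3 ≤ m) (hmo : Odd m) (a b : ZMod n) (r : Fin 6) :
    ps (dd a b r) m = 0 := by
  obtain ⟨j, hj⟩ := hmo
  rw [show m = 2 * (j - 1) + 3 by omega]
  exact dd_psum a b r (j - 1)

lemma col_exu (a b : ZMod n) (hinj : Function.Injective (ee a b)) (i : ℕ) {x : ZMod n}
    (hx : x ∈ ({a, b, a + b, -a, -b, -(a + b)} : Set (ZMod n))) :
    ∃! r : Fin 6, dd a b r i = x := by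
  obtain ⟨t, rfl⟩ := ee_surj a b hx
  obtain ⟨r, hr⟩ := (sig_bij i).2 t
  exact ⟨r, show ee a b (sig i r) = ee a b t by rw [hr],
    fun r' h => (sig_bij i).1 (by rw [hinj h, hr])⟩

end Stmt4

theorem stmt_4 (m n : ℕ) (hm : 3 ≤ m) (hmo : Odd m) (hn : 4 ≤ n) (hne : Even n)
    (a b : ZMod n)
    (h6 : ({a, b, a + b, -a, -b, -(a + b)} : Set (ZMod n)).ncard = 6) :
    CycleDecomp
      (cay m n (({(1 : ZMod m), -1} : Set (ZMod m)) ×ˢ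
        ({a, b, a + b, -a, -b, -(a + b)} : Set (ZMod n))))
      (fun _ : Fin 6 => m) := by
  have hinj := Stmt4.ee_inj a b h6
  have hsum : ∀ r : Fin 6, Stmt4.ps (Stmt4.dd a b r) m = 0 :=
    fun r => Stmt4.dd_rowsum hm hmo a b r
  refine ⟨fun r => Stmt4.fac m n (Stmt4.dd a b r), fun r => ⟨?_, ?_, ?_⟩, ?_⟩
  · exact Stmt4.fac_le hm fun i => Set.mk_mem_prod (Set.mem_insert _ _) (Stmt4.ee_mem a b _)
  · exact fun v => Stmt4.deg_two hm v
  · intro v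
    rw [Stmt4.supp_eq hm (hsum r) v, Stmt4.ncard_Vset hm]
  · intro e he
    induction e using Sym2.ind with
    | _ p q =>
      rw [SimpleGraph.mem_edgeSet, cay, SimpleGraph.fromRel_adj] at he
      obtain ⟨hne', hS⟩ := he
      have main : ∀ u w : ZMod m × ZMod n,
          w - u ∈ (({(1 : ZMod m), -1} : Set (ZMod m)) ×ˢ
            ({a, b, a + b, -a, -b, -(a + b)} : Set (ZMod n))) →
          ∃! r : Fin 6, s(u, w) ∈ (Stmt4.fac m n (Stmt4.dd a b r)).edgeSet := by
        intro u w huw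
        rw [Set.mem_prod] at huw
        obtain ⟨hf, hs⟩ := huw
        simp only [Prod.fst_sub, Set.mem_insert_iff, Set.mem_singleton_iff] at hf
        simp only [Prod.snd_sub] at hs
        rcases hf with hf | hf
        · exact Stmt4.edge_unique hm (Stmt4.dd a b) (by linear_combination hf)
            (Stmt4.col_exu a b hinj u.1.val hs)
        · have h1 : u.1 = w.1 + 1 := by linear_combination -hf
          have hs' : u.2 - w.2 ∈ ({a, b, a + b, -a, -b, -(a + b)} : Set (ZMod n)) := by
            have := Stmt4.Dsymm a b hs
            simpa using this
          have h2 := Stmt4.edge_unique hm (Stmt4.dd a b) h1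
            (Stmt4.col_exu a b hinj w.1.val hs')
          rw [Sym2.eq_swap]
          exact h2
      rcases hS with h | h
      · rw [Sym2.eq_swap]
        exact main q p h
      · exact main p q h
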